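/- Theorem 3, strict version: Assume ρ is a loss function that is twice differentiable on (0,∞) with ρ'' ≤ 0 and ρ strictly increasing on (0,∞) (u > 0), and a ≠ 0 (so d > 0). Let γℓ > 0 be a point that is not a stationary point of 𝓛 (i.e., 𝓛'(γℓ) ≠ 0), and set γℓ₊₁ = H(γℓ). If γℓ₊₁ > 0, then 𝓛(γℓ₊₁) < 𝓛(γℓ). -/

import Mathlib

open Matrix ComplexOrder

noncomputable section

/-- The covariance matrix `Σ(γ) = Σ₀ + γ·a aᴴ`. -/
def Sig {L : ℕ} (S0 : Matrix (Fin L) (Fin L) ℂ) (a : Fin L → ℂ) (γ : ℝ) :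
    Matrix (Fin L) (Fin L) ℂ :=
  S0 + (γ : ℂ) • vecMulVec a (star a)

/-- The squared Mahalanobis distance `s(γ) = yᴴ Σ(γ)⁻¹ y` (a real number). -/
def mdist {L : ℕ} (S0 : Matrix (Fin L) (Fin L) ℂ) (a : Fin L → ℂ) (y : Fin L → ℂ)
    (γ : ℝ) : ℝ :=
  (star y ⬝ᵥ (Sig S0 a γ)⁻¹ *ᵥ y).re

/-- The conditional objective `𝓛(γ) = (1/(bM)) Σₘ ρ(sₘ(γ)) + log det Σ(γ)`. -/
def obj {L M : ℕ} (S0 : Matrix (Fin L) (Fin L) ℂ) (a : Fin L → ℂ)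
    (y : Fin M → Fin L → ℂ) (b : ℝ) (ρ : ℝ → ℝ) (γ : ℝ) : ℝ :=
  (1 / (b * M)) * ∑ m, ρ (mdist S0 a (y m) γ) + Real.log ((Sig S0 a γ).det.re)

/-- The scalar `d = aᴴ Σ₀⁻¹ a`. -/
def dcoef {L : ℕ} (S0 : Matrix (Fin L) (Fin L) ℂ) (a : Fin L → ℂ) : ℝ :=
  (star a ⬝ᵥ S0⁻¹ *ᵥ a).re

/-- `σ̂²(γ) = (1/(bM)) Σₘ u(sₘ(γ)) |yₘᴴ b₀|²` with `b₀ = Σ₀⁻¹ a`. -/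
def sigmaHat {L M : ℕ} (S0 : Matrix (Fin L) (Fin L) ℂ) (a : Fin L → ℂ)
    (y : Fin M → Fin L → ℂ) (b : ℝ) (u : ℝ → ℝ) (γ : ℝ) : ℝ :=
  (1 / (b * M)) * ∑ m, u (mdist S0 a (y m) γ) * Complex.normSq (star (y m) ⬝ᵥ S0⁻¹ *ᵥ a)

lemma vmv_mul (w v : Fin L → ℂ) (M : Matrix (Fin L) (Fin L) ℂ) :
    vecMulVec w v * M = vecMulVec w (v ᵥ* M) := by
  ext i j
  simp [mul_apply, vecMulVec_apply, vecMul, dotProduct, Finset.mul_sum, mul_assoc]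

lemma mul_vmv (w v : Fin L → ℂ) (M : Matrix (Fin L) (Fin L) ℂ) :
    M * vecMulVec w v = vecMulVec (M *ᵥ w) v := by
  ext i j
  simp [mul_apply, vecMulVec_apply, mulVec, dotProduct, Finset.sum_mul, mul_assoc]

lemma vmv_vmv (w v w' v' : Fin L → ℂ) :
    vecMulVec w v * vecMulVec w' v' = (v ⬝ᵥ w') • vecMulVec w v' := by
  ext i j
  simp [mul_apply, vecMulVec_apply, dotProduct, Finset.sum_mul, Finset.mul_sum]
  ring_nf
  exact Finset.sum_congr rfl fun k _ => by ring

lemma vmv_posSemidef (a : Fin L → ℂ) : (vecMulVec a (star a)).PosSemidef := by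
  have h : vecMulVec a (star a) = replicateCol Unit a * (replicateCol Unit a)ᴴ := by
    rw [vecMulVec_eq Unit, conjTranspose_replicateCol]
  rw [h]
  exact posSemidef_self_mul_conjTranspose _

lemma Sig_posDef {S0 : Matrix (Fin L) (Fin L) ℂ} (hS0 : S0.PosDef) (a : Fin L → ℂ)
    {γ : ℝ} (hγ : 0 ≤ γ) : (Sig S0 a γ).PosDef := by
  unfold Sig
  refine hS0.add_posSemidef ?_
  obtain ⟨hH, hq⟩ := posSemidef_iff_dotProduct_mulVec.mp (vmv_posSemidef a)
  refine posSemidef_iff_dotProduct_mulVec.mpr ?_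
  constructor
  · unfold Matrix.IsHermitian at *
    rw [conjTranspose_smul, hH]
    congr 1
    simp [Complex.ext_iff]
  · intro x
    have h0 := hq x
    rw [smul_mulVec, dotProduct_smul, smul_eq_mul]
    rw [Complex.le_def] at h0 ⊢
    simp only [Complex.mul_re, Complex.mul_im, Complex.ofReal_re, Complex.ofReal_im,
      Complex.zero_re, Complex.zero_im] at *
    constructor
    · nlinarith [h0.1, h0.2]
    · nlinarith [h0.2]

lemma nonneg_eq_re {z : ℂ} (hz : 0 ≤ z) : z = (z.re : ℂ) := by
  rw [Complex.le_def] at hz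
  exact Complex.ext rfl (by simp [← hz.2])

lemma sherman {S0 : Matrix (Fin L) (Fin L) ℂ} (hS0 : S0.PosDef) (a : Fin L → ℂ) {γ : ℝ}
    (h : (1:ℂ) + (γ:ℂ) * (star a ⬝ᵥ S0⁻¹ *ᵥ a) ≠ 0) :
    (Sig S0 a γ)⁻¹ = S0⁻¹ - ((γ:ℂ)/((1:ℂ) + (γ:ℂ) * (star a ⬝ᵥ S0⁻¹ *ᵥ a))) •
      (S0⁻¹ * vecMulVec a (star a) * S0⁻¹) := by
  set N := S0⁻¹ with hN
  set A := vecMulVec a (star a) with hA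
  set dC := star a ⬝ᵥ N *ᵥ a with hdC
  set c := (γ:ℂ)/((1:ℂ) + (γ:ℂ) * dC) with hc
  have hdet : IsUnit S0.det := isUnit_iff_ne_zero.mpr (ne_of_gt hS0.det_pos)
  have hS0N : S0 * N = 1 := Matrix.mul_nonsing_inv S0 hdet
  have hANA : A * N * A = dC • A := by
    rw [hA, vmv_mul, vmv_vmv, ← Matrix.dotProduct_mulVec]
  apply Matrix.inv_eq_right_inv
  have expand : Sig S0 a γ * (N - c • (N * A * N))
      = 1 + ((γ:ℂ) - c - (γ:ℂ) * c * dC) • (A * N) := by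
    unfold Sig
    rw [Matrix.add_mul, Matrix.mul_sub, Matrix.mul_sub, hS0N]
    rw [Matrix.mul_smul, Matrix.mul_smul, ← Matrix.mul_assoc, ← Matrix.mul_assoc, hS0N,
      Matrix.one_mul]
    rw [Matrix.smul_mul, Matrix.smul_mul, smul_smul]
    have h1 : vecMulVec a (star a) * (N * A * N) = dC • (A * N) := by
      rw [← hA, ← Matrix.mul_assoc, ← Matrix.mul_assoc, hANA, Matrix.smul_mul]
    rw [h1, ← hA]
    module
  rw [expand]
  have : (γ:ℂ) - c - (γ:ℂ) * c * dC = 0 := by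
    rw [hc]
    field_simp
    ring
  rw [this, zero_smul, add_zero]

lemma dC_eq {S0 : Matrix (Fin L) (Fin L) ℂ} (hS0 : S0.PosDef) (a : Fin L → ℂ) :
    star a ⬝ᵥ S0⁻¹ *ᵥ a = ((dcoef S0 a : ℝ) : ℂ) := by
  rcases eq_or_ne a 0 with rfl | ha
  · simp [dcoef]
  · exact nonneg_eq_re (le_of_lt (hS0.inv.dotProduct_mulVec_pos ha))

lemma dcoef_pos {S0 : Matrix (Fin L) (Fin L) ℂ} (hS0 : S0.PosDef) {a : Fin L → ℂ}
    (ha : a ≠ 0) : 0 < dcoef S0 a := by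
  have := hS0.inv.dotProduct_mulVec_pos ha
  rw [Complex.lt_def] at this
  exact this.1

lemma herm_swap {N : Matrix (Fin L) (Fin L) ℂ} (hN : N.IsHermitian) (x z : Fin L → ℂ) :
    star x ⬝ᵥ N *ᵥ z = star (star z ⬝ᵥ N *ᵥ x) := by
  rw [star_dotProduct, star_mulVec, hN.eq, ← Matrix.dotProduct_mulVec]

lemma qf_vmv (w v y : Fin L → ℂ) :
    star y ⬝ᵥ (vecMulVec w v) *ᵥ y = (star y ⬝ᵥ w) * (v ⬝ᵥ y) := by
  simp [dotProduct, vecMulVec_apply, mulVec, Finset.mul_sum, Finset.sum_mul]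
  rw [Finset.sum_comm]
  exact Finset.sum_congr rfl fun i _ => Finset.sum_congr rfl fun j _ => by ring

lemma det_Sig {S0 : Matrix (Fin L) (Fin L) ℂ} (hS0 : S0.PosDef) (a : Fin L → ℂ) (γ : ℝ) :
    (Sig S0 a γ).det = S0.det * (1 + (γ:ℂ) * ((dcoef S0 a : ℝ) : ℂ)) := by
  have hdet : IsUnit S0.det := isUnit_iff_ne_zero.mpr (ne_of_gt hS0.det_pos)
  have hvm : (γ:ℂ) • vecMulVec a (star a) = replicateCol Unit ((γ:ℂ) • a) * replicateRow Unit (star a) := by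
    rw [← vecMulVec_eq Unit]
    ext i j
    simp [vecMulVec_apply]
    ring
  unfold Sig
  rw [hvm, Matrix.det_add_replicateCol_mul_replicateRow hdet]
  congr 1
  rw [det_unique]
  simp [Matrix.mul_apply, Matrix.replicateRow_apply, Matrix.replicateCol_apply, ← dC_eq hS0 a, dotProduct,
    mulVec, Finset.mul_sum, Finset.sum_mul]
  rw [Finset.sum_comm]
  refine Finset.sum_congr rfl fun i _ => Finset.sum_congr rfl fun j _ => by ring

lemma mdist_eq {S0 : Matrix (Fin L) (Fin L) ℂ} (hS0 : S0.PosDef) (a : Fin L → ℂ)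
    (y : Fin L → ℂ) {γ : ℝ} (hγ : 1 + γ * dcoef S0 a ≠ 0) :
    mdist S0 a y γ = (star y ⬝ᵥ S0⁻¹ *ᵥ y).re
      - (γ / (1 + γ * dcoef S0 a)) * Complex.normSq (star y ⬝ᵥ S0⁻¹ *ᵥ a) := by
  have hd := dC_eq hS0 a
  have hne : (1:ℂ) + (γ:ℂ) * (star a ⬝ᵥ S0⁻¹ *ᵥ a) ≠ 0 := by
    rw [hd]
    intro hcon
    apply hγ
    exact_mod_cast congrArg Complex.re hcon |>.symm.trans (by simp) |>.symm.trans rfl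
  unfold mdist
  rw [sherman hS0 a hne]
  rw [Matrix.sub_mulVec, dotProduct_sub, Matrix.smul_mulVec, dotProduct_smul]
  have hNAN : S0⁻¹ * vecMulVec a (star a) * S0⁻¹
      = vecMulVec (S0⁻¹ *ᵥ a) (star a ᵥ* S0⁻¹) := by
    rw [mul_vmv, vmv_mul]
  rw [hNAN, qf_vmv]
  have h1 : star y ⬝ᵥ S0⁻¹ *ᵥ a = star y ⬝ᵥ S0⁻¹ *ᵥ a := rfl
  have h2 : (star a ᵥ* S0⁻¹) ⬝ᵥ y = star (star y ⬝ᵥ S0⁻¹ *ᵥ a) := by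
    rw [← Matrix.dotProduct_mulVec]
    exact herm_swap hS0.isHermitian.inv a y
  rw [h2]
  have h3 : (star y ⬝ᵥ S0⁻¹ *ᵥ a) * star (star y ⬝ᵥ S0⁻¹ *ᵥ a)
      = ((Complex.normSq (star y ⬝ᵥ S0⁻¹ *ᵥ a) : ℝ) : ℂ) := by
    rw [Complex.star_def, Complex.mul_conj]
  rw [smul_eq_mul, h3, hd]
  have h4 : ((γ:ℂ) / (1 + (γ:ℂ) * ((dcoef S0 a : ℝ):ℂ))) * ((Complex.normSq (star y ⬝ᵥ S0⁻¹ *ᵥ a) : ℝ) : ℂ)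
      = (((γ / (1 + γ * dcoef S0 a)) * Complex.normSq (star y ⬝ᵥ S0⁻¹ *ᵥ a) : ℝ) : ℂ) := by
    push_cast
    ring
  rw [h4, Complex.sub_re, Complex.ofReal_re]

lemma tangent_bound (ρ : ℝ → ℝ)
    (hdiff : ∀ t > (0 : ℝ), DifferentiableAt ℝ ρ t)
    (hdiff2 : ∀ t > (0 : ℝ), DifferentiableAt ℝ (deriv ρ) t)
    (hconc : ∀ t > (0 : ℝ), deriv (deriv ρ) t ≤ 0)
    {s1 s2 : ℝ} (h1 : 0 < s1) (h2 : 0 < s2) :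
    ρ s2 ≤ ρ s1 + deriv ρ s1 * (s2 - s1) := by
  have hu_anti : AntitoneOn (deriv ρ) (Set.Ioi 0) := by
    refine antitoneOn_of_deriv_nonpos (convex_Ioi 0) ?_ ?_ ?_
    · exact fun x hx => ((hdiff2 x hx).continuousAt).continuousWithinAt
    · rw [interior_Ioi]
      exact fun x hx => (hdiff2 x hx).differentiableWithinAt
    · rw [interior_Ioi]
      exact fun x hx => hconc x hx
  rcases lt_trichotomy s1 s2 with h | h | h
  · obtain ⟨c, hc, hslope⟩ := exists_deriv_eq_slope ρ h
      (fun x hx => (hdiff x (lt_of_lt_of_le h1 hx.1)).continuousAt.continuousWithinAt)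
      (fun x hx => (hdiff x (lt_trans h1 hx.1)).differentiableWithinAt)
    have hcu : deriv ρ c ≤ deriv ρ s1 := hu_anti (Set.mem_Ioi.mpr h1)
      (Set.mem_Ioi.mpr (lt_trans h1 hc.1)) (le_of_lt hc.1)
    have : ρ s2 - ρ s1 = deriv ρ c * (s2 - s1) := by
      rw [hslope, div_mul_cancel₀ _ (sub_ne_zero.mpr h.ne')]
    nlinarith [this, hcu]
  · subst h; simp
  · obtain ⟨c, hc, hslope⟩ := exists_deriv_eq_slope ρ h
      (fun x hx => (hdiff x (lt_of_lt_of_le h2 hx.1)).continuousAt.continuousWithinAt)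
      (fun x hx => (hdiff x (lt_trans h2 hx.1)).differentiableWithinAt)
    have hcu : deriv ρ s1 ≤ deriv ρ c := hu_anti
      (Set.mem_Ioi.mpr (lt_trans h2 hc.1)) (Set.mem_Ioi.mpr h1) (le_of_lt hc.2)
    have : ρ s1 - ρ s2 = deriv ρ c * (s1 - s2) := by
      rw [hslope, div_mul_cancel₀ _ (sub_ne_zero.mpr h.ne')]
    nlinarith [this, hcu]

lemma mdist_pos {S0 : Matrix (Fin L) (Fin L) ℂ} (hS0 : S0.PosDef) (a : Fin L → ℂ)
    {y : Fin L → ℂ} (hy : y ≠ 0) {γ : ℝ} (hγ : 0 ≤ γ) : 0 < mdist S0 a y γ := by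
  have h := ((Sig_posDef hS0 a hγ).inv).dotProduct_mulVec_pos hy
  rw [Complex.lt_def] at h
  simpa [mdist] using h.1

lemma det_re_pos {S0 : Matrix (Fin L) (Fin L) ℂ} (hS0 : S0.PosDef) : 0 < S0.det.re := by
  have h := hS0.det_pos
  rw [Complex.lt_def] at h
  simpa using h.1

set_option maxHeartbeats 1000000 in
theorem stmt5 (L M : ℕ) (hL : 0 < L) (hM : 0 < M)
    (S0 : Matrix (Fin L) (Fin L) ℂ) (hS0 : S0.PosDef)
    (a : Fin L → ℂ) (y : Fin M → Fin L → ℂ) (b : ℝ) (hb : 0 < b)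
    (ρ : ℝ → ℝ)
    (hmono : MonotoneOn ρ (Set.Ici 0))
    (hdiff : ∀ t > (0 : ℝ), DifferentiableAt ℝ ρ t)
    (hderiv : ∀ t > (0 : ℝ), 0 ≤ deriv ρ t)
    (hgeo : ConvexOn ℝ Set.univ (fun x => ρ (Real.exp x)))
    (hdiff2 : ∀ t > (0 : ℝ), DifferentiableAt ℝ (deriv ρ) t)
    (hconc : ∀ t > (0 : ℝ), deriv (deriv ρ) t ≤ 0)
    (hupos : ∀ t > (0 : ℝ), 0 < deriv ρ t)
    (ha : a ≠ 0)
    (γℓ γnext : ℝ) (hγℓ : 0 < γℓ)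
    (hstat : deriv (obj S0 a y b ρ) γℓ ≠ 0)
    (hupdate : γnext = (sigmaHat S0 a y b (deriv ρ) γℓ - dcoef S0 a) / (dcoef S0 a) ^ 2)
    (hpos : 0 < γnext) :
    obj S0 a y b ρ γnext < obj S0 a y b ρ γℓ := by
  classical
  set d := dcoef S0 a with hd_def
  have hd : 0 < d := dcoef_pos hS0 ha
  set c : Fin M → ℝ := fun m => Complex.normSq (star (y m) ⬝ᵥ S0⁻¹ *ᵥ a) with hc_def
  set t : Fin M → ℝ := fun m => (star (y m) ⬝ᵥ S0⁻¹ *ᵥ (y m)).re with ht_def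
  have hcnn : ∀ m, 0 ≤ c m := fun m => Complex.normSq_nonneg _
  set s : Fin M → ℝ → ℝ := fun m γ => t m - γ / (1 + γ * d) * c m with hs_def
  have hmd : ∀ (m) (γ : ℝ), 1 + γ * d ≠ 0 → mdist S0 a (y m) γ = s m γ :=
    fun m γ h => mdist_eq hS0 a (y m) h
  have hβℓ : 0 < 1 + γℓ * d := by nlinarith
  have hβn : 0 < 1 + γnext * d := by nlinarith
  have hbM : 0 < b * (M : ℝ) := mul_pos hb (by exact_mod_cast hM)
  -- the scalar form of the objective
  set F : ℝ → ℝ := fun γ => (1 / (b * M)) * ∑ m, ρ (s m γ)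
      + (Real.log (S0.det.re) + Real.log (1 + γ * d)) with hF_def
  have hobj : ∀ γ : ℝ, 0 < 1 + γ * d → obj S0 a y b ρ γ = F γ := by
    intro γ hγ
    have h2 : (Sig S0 a γ).det.re = S0.det.re * (1 + γ * d) := by
      rw [det_Sig hS0 a γ, nonneg_eq_re hS0.det_pos.le]
      have : ((S0.det.re : ℝ) : ℂ) * (1 + (γ:ℂ) * ((d : ℝ) : ℂ))
          = (((S0.det.re * (1 + γ * d) : ℝ)) : ℂ) := by push_cast; ring
      rw [this, Complex.ofReal_re]
      simp
    unfold obj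
    rw [h2, Real.log_mul (ne_of_gt (det_re_pos hS0)) (ne_of_gt hγ), hF_def]
    simp only [hmd _ γ (ne_of_gt hγ)]
  -- positivity of s
  have hspos : ∀ m (γ : ℝ), 0 ≤ γ → c m ≠ 0 → 0 < s m γ := by
    intro m γ hγ hc0
    have hym : y m ≠ 0 := by
      intro h
      apply hc0
      simp [hc_def, h]
    have h1 : 0 < 1 + γ * d := by nlinarith
    rw [← hmd m γ (ne_of_gt h1)]
    exact mdist_pos hS0 a hym hγ
  -- derivative of each summand
  have hβd : ∀ γℓ' : ℝ, HasDerivAt (fun γ : ℝ => 1 + γ * d) d γℓ' := by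
    intro γℓ'
    simpa using ((hasDerivAt_id γℓ').mul_const d).const_add 1
  have hsderiv : ∀ m, HasDerivAt (fun γ => ρ (s m γ))
      (deriv ρ (s m γℓ) * (-(c m) / (1 + γℓ * d) ^ 2)) γℓ := by
    intro m
    by_cases hc0 : c m = 0
    · have heq : (fun γ => ρ (s m γ)) = fun _ => ρ (t m) := by
        funext γ; simp [hs_def, hc0]
      have hz : deriv ρ (s m γℓ) * (-(c m) / (1 + γℓ * d) ^ 2) = 0 := by simp [hc0]
      rw [heq, hz]
      exact hasDerivAt_const _ _
    · have hsp : 0 < s m γℓ := hspos m γℓ hγℓ.le hc0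
      have hg : HasDerivAt (fun γ : ℝ => γ / (1 + γ * d)) (1 / (1 + γℓ * d) ^ 2) γℓ := by
        have h := (hasDerivAt_id γℓ).div (hβd γℓ) (ne_of_gt hβℓ)
        refine h.congr_deriv ?_
        simp only [id]; ring
      have hs' : HasDerivAt (s m) (-(c m) / (1 + γℓ * d) ^ 2) γℓ := by
        have h := (hg.mul_const (c m)).const_sub (t m)
        refine h.congr_deriv ?_
        field_simp
      exact (hdiff _ hsp).hasDerivAt.comp γℓ hs'
  have hlog : HasDerivAt (fun γ : ℝ => Real.log (S0.det.re) + Real.log (1 + γ * d))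
      (d / (1 + γℓ * d)) γℓ := by
    have h := (Real.hasDerivAt_log (ne_of_gt hβℓ)).comp γℓ (hβd γℓ)
    have h2 : HasDerivAt (fun γ : ℝ => Real.log (1 + γ * d)) ((1 + γℓ * d)⁻¹ * d) γℓ := h
    have h3 := h2.const_add (Real.log (S0.det.re))
    refine h3.congr_deriv ?_
    field_simp
  set D : ℝ := (1 / (b * M)) * ∑ m, deriv ρ (s m γℓ) * (-(c m) / (1 + γℓ * d) ^ 2)
      + d / (1 + γℓ * d) with hD_def
  have hF' : HasDerivAt F D γℓ := by
    refine HasDerivAt.add ?_ hlog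
    exact (HasDerivAt.fun_sum fun m _ => hsderiv m).const_mul _
  have hobj_ev : obj S0 a y b ρ =ᶠ[nhds γℓ] F := by
    have hopen : IsOpen {γ : ℝ | 0 < 1 + γ * d} :=
      isOpen_lt continuous_const (by continuity)
    filter_upwards [hopen.mem_nhds hβℓ] with γ hγ using hobj γ hγ
  have hderiv_obj : deriv (obj S0 a y b ρ) γℓ = D := by
    rw [hobj_ev.deriv_eq]; exact hF'.deriv
  -- the fixed point quantity
  set K : ℝ := (1 / (b * M)) * ∑ m, deriv ρ (s m γℓ) * c m with hK_def
  have hK : sigmaHat S0 a y b (deriv ρ) γℓ = K := by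
    unfold sigmaHat
    rw [hK_def]
    congr 1
    refine Finset.sum_congr rfl fun m _ => ?_
    rw [hmd m γℓ (ne_of_gt hβℓ)]
  have hKeq : K = d * (1 + γnext * d) := by
    have h := hupdate
    rw [hK] at h
    have hd2 : (d : ℝ) ^ 2 ≠ 0 := by positivity
    have h2 : K - d = γnext * d ^ 2 := by rw [h]; field_simp
    linear_combination h2
  have hDval : D = -K / (1 + γℓ * d) ^ 2 + d / (1 + γℓ * d) := by
    rw [hD_def, hK_def]
    have hsum : ∑ m, deriv ρ (s m γℓ) * (-(c m) / (1 + γℓ * d) ^ 2)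
        = (-1 / (1 + γℓ * d) ^ 2) * ∑ m, deriv ρ (s m γℓ) * c m := by
      rw [Finset.mul_sum]
      refine Finset.sum_congr rfl fun m _ => ?_
      ring
    rw [hsum]
    ring
  have hβne : 1 + γnext * d ≠ 1 + γℓ * d := by
    intro heq
    apply hstat
    rw [hderiv_obj, hDval, hKeq, heq]
    field_simp
    ring
  -- per-sample surrogate bound
  have hperm : ∀ m, ρ (s m γnext) ≤ ρ (s m γℓ) + deriv ρ (s m γℓ) * (s m γnext - s m γℓ) := by
    intro m
    by_cases hc0 : c m = 0
    · have e1 : s m γnext = s m γℓ := by simp only [hs_def, hc0, mul_zero, sub_zero]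
      rw [e1, sub_self, mul_zero, add_zero]
    · exact tangent_bound ρ hdiff hdiff2 hconc (hspos m γℓ hγℓ.le hc0) (hspos m γnext hpos.le hc0)
  have hdiffm : ∀ m, s m γnext - s m γℓ
      = (γℓ / (1 + γℓ * d) - γnext / (1 + γnext * d)) * c m := by
    intro m
    rw [hs_def]
    ring
  have hsum_bound : ∑ m, ρ (s m γnext) ≤ ∑ m, ρ (s m γℓ)
      + (γℓ / (1 + γℓ * d) - γnext / (1 + γnext * d)) * ∑ m, deriv ρ (s m γℓ) * c m := by
    rw [Finset.mul_sum, ← Finset.sum_add_distrib]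
    refine Finset.sum_le_sum fun m _ => ?_
    calc ρ (s m γnext) ≤ ρ (s m γℓ) + deriv ρ (s m γℓ) * (s m γnext - s m γℓ) := hperm m
    _ = ρ (s m γℓ) + (γℓ / (1 + γℓ * d) - γnext / (1 + γnext * d)) * (deriv ρ (s m γℓ) * c m) := by
        rw [hdiffm m]; ring
  -- conclude
  set x : ℝ := (1 + γnext * d) / (1 + γℓ * d) with hx_def
  have hxpos : 0 < x := div_pos hβn hβℓ
  have hxne : x ≠ 1 := by
    rw [hx_def]
    intro h1
    apply hβne
    rw [div_eq_iff (ne_of_gt hβℓ), one_mul] at h1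
    exact h1
  have hlogx := Real.log_lt_sub_one_of_pos hxpos hxne
  have hkey : (γℓ / (1 + γℓ * d) - γnext / (1 + γnext * d)) * K = 1 - x := by
    rw [hKeq, hx_def]
    field_simp
    ring
  rw [hobj γnext hβn, hobj γℓ hβℓ, hF_def]
  have hlogdiff : Real.log (1 + γnext * d) - Real.log (1 + γℓ * d) = Real.log x := by
    rw [hx_def, Real.log_div (ne_of_gt hβn) (ne_of_gt hβℓ)]
  have hmul := mul_le_mul_of_nonneg_left hsum_bound (le_of_lt (one_div_pos.mpr hbM))
  simp only []
  have hfin : (1 / (b * M)) * ∑ m, ρ (s m γnext) - (1 / (b * M)) * ∑ m, ρ (s m γℓ)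
      ≤ (γℓ / (1 + γℓ * d) - γnext / (1 + γnext * d)) * K := by
    rw [hK_def]
    calc (1 / (b * M)) * ∑ m, ρ (s m γnext) - (1 / (b * M)) * ∑ m, ρ (s m γℓ)
        ≤ (1 / (b * M)) * (∑ m, ρ (s m γℓ)
            + (γℓ / (1 + γℓ * d) - γnext / (1 + γnext * d)) * ∑ m, deriv ρ (s m γℓ) * c m)
          - (1 / (b * M)) * ∑ m, ρ (s m γℓ) := by linarith [hmul]
      _ = (γℓ / (1 + γℓ * d) - γnext / (1 + γnext * d))
            * ((1 / (b * M)) * ∑ m, deriv ρ (s m γℓ) * c m) := by ring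
  rw [hkey] at hfin
  have := hlogdiff
  linarith [hfin, hlogx, hlogdiff.ge, hlogdiff.le]
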